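/- For each real m, define g(t) = 2t + C·t/√(1+t²) - m·(t² - C/√(1+t²)) + 2m + m³. Then g is continuous on ℝ and, for C > -2, there exists t ∈ ℝ with g(t) = 0; i.e., every line of the family y = mx - 2m - m³ meets the curve x(t) = t² - C/√(1+t²), y(t) = 2t + C·t/√(1+t²). -/
import Mathlib

/-- For each real `m` and `C > -2`, the function
`g(t) = 2t + C*t/√(1+t^2) - m*(t^2 - C/√(1+t^2)) + 2m + m^3` is continuous and
has a zero, i.e. every line of the family `y = m*x - 2*m - m^3` meets the curve. -/
theorem line_meets_curve (m C : ℝ) (hC : -2 < C) :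
    Continuous (fun t : ℝ =>
      2 * t + C * t / Real.sqrt (1 + t ^ 2) -
        m * (t ^ 2 - C / Real.sqrt (1 + t ^ 2)) + 2 * m + m ^ 3) ∧
    ∃ t : ℝ,
      2 * t + C * t / Real.sqrt (1 + t ^ 2) -
        m * (t ^ 2 - C / Real.sqrt (1 + t ^ 2)) + 2 * m + m ^ 3 = 0 := by
  have hne : ∀ t : ℝ, Real.sqrt (1 + t ^ 2) ≠ 0 := by
    intro t
    have : (0:ℝ) < 1 + t ^ 2 := by positivity
    exact ne_of_gt (Real.sqrt_pos.mpr this)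
  constructor
  · apply Continuous.add
    apply Continuous.add
    apply Continuous.sub
    · exact (continuous_const.mul continuous_id).add
        ((continuous_const.mul continuous_id).div
          (Real.continuous_sqrt.comp (continuous_const.add (continuous_pow 2))) hne)
    · exact continuous_const.mul ((continuous_pow 2).sub
        (continuous_const.div (Real.continuous_sqrt.comp (continuous_const.add (continuous_pow 2))) hne))
    all_goals exact continuous_const
  · refine ⟨-m, ?_⟩
    have h := hne (-m)
    field_simp
    ring
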